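/- arXiv:1912.13394 — 8 statements merged into one kernel-verified Lean document; each statement's English description precedes it below -/
import Mathlib

section
/- Let r > 0 be a real number, let m, k ≥ 1 be integers, and let a, b, c be real numbers (the values at the start, an intermediate point, and the end of a path of lengths m and k on its two pieces). Then σ_r(a, c, m + k) = [(r^k + r^{k+1} + ⋯ + r^{k+m−1})/(1 + r + ⋯ + r^{m+k−1})]·σ_r(a, b, m) + [(1 + r + ⋯ + r^{k−1})/(1 + r + ⋯ + r^{m+k−1})]·σ_r(b, c, k); in particular the r-biased slope on a path is a convex combination of the r-biased slopes on its two pieces. -/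
/-- The `r`-biased slope of a path of length `n` whose initial vertex has value `a`
and whose terminal vertex has value `b`: `σ_r(a, b, n) = (b - rⁿ a)/(1 + r + ⋯ + rⁿ⁻¹)`. -/
noncomputable def biasedSlope (r : ℝ) (a b : ℝ) (n : ℕ) : ℝ :=
  (b - r ^ n * a) / (∑ i ∈ Finset.range n, r ^ i)

/-! Writing `S n = 1 + r + ⋯ + rⁿ⁻¹`, the numerators telescope:
`rᵏ · S m · σ_r(a, b, m) + S k · σ_r(b, c, k) = rᵏ (b - rᵐ a) + (c - rᵏ b) = c - rᵐ⁺ᵏ a`. -/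

open Finset

theorem sum_Ico_pow_eq_pow_mul_geom_sum {R : Type*} [Semiring R] (r : R) (k m : ℕ) :
    ∑ j ∈ Ico k (k + m), r ^ j = r ^ k * ∑ i ∈ range m, r ^ i := by
  rw [sum_Ico_eq_sum_range, mul_sum, Nat.add_sub_cancel_left]
  simp only [pow_add]

theorem geom_sum_mul_biasedSlope {r : ℝ} {n : ℕ} (hn : ∑ i ∈ range n, r ^ i ≠ 0) (a b : ℝ) :
    (∑ i ∈ range n, r ^ i) * biasedSlope r a b n = b - r ^ n * a :=
  mul_div_cancel₀ _ hn

theorem biasedSlope_add {r : ℝ} {m k : ℕ} (hm : ∑ i ∈ range m, r ^ i ≠ 0)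
    (hk : ∑ i ∈ range k, r ^ i ≠ 0) (a b c : ℝ) :
    biasedSlope r a c (m + k) =
      (r ^ k * ∑ i ∈ range m, r ^ i) / (∑ j ∈ range (m + k), r ^ j) * biasedSlope r a b m +
        (∑ j ∈ range k, r ^ j) / (∑ j ∈ range (m + k), r ^ j) * biasedSlope r b c k := by
  rw [div_mul_eq_mul_div, div_mul_eq_mul_div, ← add_div, mul_assoc,
    geom_sum_mul_biasedSlope hm, geom_sum_mul_biasedSlope hk, biasedSlope]
  ring

/-- the `r`-biased slope on a path of length `m + k` is the stated convex
combination of the `r`-biased slopes on its two pieces of lengths `m` and `k`. -/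
theorem stmt_4 (r : ℝ) (hr : 0 < r) (m k : ℕ) (hm : 1 ≤ m) (hk : 1 ≤ k) (a b c : ℝ) :
    biasedSlope r a c (m + k) =
      ((∑ j ∈ Finset.Ico k (k + m), r ^ j) / (∑ j ∈ Finset.range (m + k), r ^ j)) *
          biasedSlope r a b m +
        ((∑ j ∈ Finset.range k, r ^ j) / (∑ j ∈ Finset.range (m + k), r ^ j)) *
          biasedSlope r b c k := by
  rw [sum_Ico_pow_eq_pow_mul_geom_sum]
  exact biasedSlope_add (geom_sum_pos hr.le (by omega)).ne' (geom_sum_pos hr.le (by omega)).ne'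
    a b c
end

section
/- Let r > 0 be a real number, let n, n′ ≥ 1 be integers, and let a < b be real numbers. Then σ_r(a, b, n) < σ_r(a, b, n′) if and only if n′ < n. In other words, when the same strict increase in value is achieved on a shorter path, the r-biased slope is strictly greater. -/
open Finset

lemma geom_sum_strictMono {r : ℝ} (hr : 0 < r) : StrictMono (fun n : ℕ => ∑ i ∈ range n, r ^ i) :=
  strictMono_nat_of_lt_succ fun n => by
    simpa only [sum_range_succ] using lt_add_of_pos_right _ (pow_pos hr n)

lemma biasedSlope_eq_div_geom_sum_add (r a b : ℝ) {n : ℕ} (hS : ∑ i ∈ range n, r ^ i ≠ 0) :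
    biasedSlope r a b n = (b - a) / (∑ i ∈ range n, r ^ i) + (1 - r) * a := by
  rw [biasedSlope, div_add' _ _ _ hS]
  congr 1
  linear_combination a * geom_sum_mul r n

lemma biasedSlope_lt_biasedSlope_iff {r : ℝ} (hr : 0 < r) {n n' : ℕ} (hn : n ≠ 0) (hn' : n' ≠ 0)
    {a b : ℝ} (hab : a < b) : biasedSlope r a b n < biasedSlope r a b n' ↔ n' < n := by
  have hS := geom_sum_pos hr.le hn (x := r)
  have hS' := geom_sum_pos hr.le hn' (x := r)
  rw [biasedSlope_eq_div_geom_sum_add r a b hS.ne', biasedSlope_eq_div_geom_sum_add r a b hS'.ne',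
    add_lt_add_iff_right, div_lt_div_iff_of_pos_left (sub_pos.2 hab) hS hS',
    (geom_sum_strictMono hr).lt_iff_lt]

/-- for `a < b`, the same increase achieved on a shorter path has strictly
greater `r`-biased slope: `σ_r(a, b, n) < σ_r(a, b, n') ↔ n' < n`. -/
theorem stmt_8 (r : ℝ) (hr : 0 < r) (n n' : ℕ) (hn : 1 ≤ n) (hn' : 1 ≤ n')
    (a b : ℝ) (hab : a < b) :
    biasedSlope r a b n < biasedSlope r a b n' ↔ n' < n :=
  biasedSlope_lt_biasedSlope_iff hr (by omega) (by omega) hab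
end

section
/- Let p ∈ (0,1), q = 1 − p, r = q/p, n ≥ 1, and let u : {0,…,n} → ℝ be r-biased infinity harmonic on the path 0—1—⋯—n with boundary {0,n}, with u(0) = m ≤ M = u(n). Then all edge r-biased slopes are equal and equal the r-biased slope of the whole path: u(i+1) − r·u(i) = (M − rⁿ·m)/(1 + r + ⋯ + r^{n−1}) for all i = 0,…,n−1. -/
/-- if `u` is `r`-biased infinity harmonic on the path `0 — ⋯ — n` with
boundary `{0, n}` and `u 0 = m ≤ M = u n`, then all edge `r`-biased slopes are equal and
equal the `r`-biased slope of the whole path: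
`u (i+1) - r u i = (M - rⁿ m)/(1 + r + ⋯ + rⁿ⁻¹)` for all `i < n`. -/
theorem stmt_11 (p q r : ℝ) (hp : p ∈ Set.Ioo (0 : ℝ) 1) (hq : q = 1 - p) (hr : r = q / p)
    (n : ℕ) (hn : 1 ≤ n) (m M : ℝ) (hmM : m ≤ M)
    (u : ℕ → ℝ) (hu0 : u 0 = m) (hun : u n = M)
    (hharm : ∀ i, 0 < i → i < n →
      p * max (u (i - 1)) (u (i + 1)) + q * min (u (i - 1)) (u (i + 1)) = u i) :
    ∀ i < n, u (i + 1) - r * u i = (M - r ^ n * m) / (∑ j ∈ Finset.range n, r ^ j) := by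
  obtain ⟨hp0, hp1⟩ := hp
  subst hq
  have hq0 : (0:ℝ) < 1 - p := by linarith
  have hr0 : 0 < r := by rw [hr]; positivity
  have hp' : p ≠ 0 := ne_of_gt hp0
  -- step 1: u 0 ≤ u 1
  have key01 : u 0 ≤ u 1 := by
    by_contra h
    push_neg at h
    have dec : ∀ j, j < n → u (j + 1) < u j := by
      intro j
      induction j with
      | zero => intro _; simpa using h
      | succ k ih =>
        intro hk
        have h1 : u (k + 1) < u k := ih (by omega)
        have hh := hharm (k + 1) (by omega) hk
        simp only [Nat.add_sub_cancel] at hh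
        rcases le_or_gt (u k) (u (k + 1 + 1)) with hc | hc
        · rw [max_eq_right hc, min_eq_left hc] at hh
          nlinarith [mul_nonneg hp0.le (sub_nonneg.2 hc)]
        · rw [max_eq_left hc.le, min_eq_right hc.le] at hh
          nlinarith [mul_pos hp0 (by linarith : (0:ℝ) < u k - u (k + 1))]
    have aux : ∀ j, j + 1 ≤ n → u (j + 1) < u 0 := by
      intro j
      induction j with
      | zero => intro hj; exact dec 0 (by omega)
      | succ k ih =>
        intro hj
        exact lt_trans (dec (k + 1) (by omega)) (ih (by omega))
    have h2 := aux (n - 1) (by omega)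
    have hn' : n - 1 + 1 = n := by omega
    rw [hn'] at h2
    linarith
  -- step 2: u is nondecreasing
  have mono : ∀ j, j < n → u j ≤ u (j + 1) := by
    intro j
    induction j with
    | zero => intro _; exact key01
    | succ k ih =>
      intro hk
      have h1 : u k ≤ u (k + 1) := ih (by omega)
      have hh := hharm (k + 1) (by omega) hk
      simp only [Nat.add_sub_cancel] at hh
      rcases le_or_gt (u k) (u (k + 1 + 1)) with hc | hc
      · rw [max_eq_right hc, min_eq_left hc] at hh
        nlinarith [mul_nonneg hq0.le (sub_nonneg.2 h1), hp0]
      · rw [max_eq_left hc.le, min_eq_right hc.le] at hh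
        nlinarith [mul_nonneg hp0.le (sub_nonneg.2 h1), mul_pos hq0 (by linarith : (0:ℝ) < u k - u (k + 1 + 1))]
  -- step 3: all slopes equal the first one
  have slope : ∀ j, j < n → u (j + 1) - r * u j = u 1 - r * u 0 := by
    intro j
    induction j with
    | zero => intro _; rfl
    | succ k ih =>
      intro hk
      have h1 : u k ≤ u (k + 1) := mono k (by omega)
      have h2 : u (k + 1) ≤ u (k + 1 + 1) := mono (k + 1) hk
      have hc : u k ≤ u (k + 1 + 1) := le_trans h1 h2
      have hh := hharm (k + 1) (by omega) hk
      simp only [Nat.add_sub_cancel] at hh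
      rw [max_eq_right hc, min_eq_left hc] at hh
      have hstep : u (k + 1 + 1) - r * u (k + 1) = u (k + 1) - r * u k := by
        rw [hr]
        field_simp
        nlinarith [hh]
      rw [hstep]
      exact ih (by omega)
  -- step 4: telescoping sum
  set s := u 1 - r * u 0 with hs
  have tel : ∀ k, k ≤ n → u k - r ^ k * u 0 = s * ∑ j ∈ Finset.range k, r ^ j := by
    intro k
    induction k with
    | zero => intro _; simp
    | succ k ih =>
      intro hk
      have h1 := ih (by omega)
      have h2 := slope k (by omega)
      rw [geom_sum_succ]
      have : u (k + 1) = s + r * u k := by rw [← h2]; ring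
      rw [this]
      rw [sub_eq_iff_eq_add] at h1
      rw [h1]
      ring
  have hS : 0 < ∑ j ∈ Finset.range n, r ^ j := by
    apply Finset.sum_pos
    · intro j _; positivity
    · exact ⟨0, Finset.mem_range.2 (by omega)⟩
  intro i hi
  rw [← hun, ← hu0]
  have h1 := tel n le_rfl
  rw [h1, mul_div_assoc, div_self (ne_of_gt hS), mul_one]
  exact slope i hi
end

section
/- Let G be a finite connected simple graph on vertex set V with |V| ≥ 2, let V₀ ⊆ V be nonempty, let g : V₀ → ℝ, let p ∈ (0,1) and q = 1 − p. Set m = min_{x∈V₀} g(x) and M = max_{x∈V₀} g(x). Define u₀ : V → ℝ by u₀(x) = g(x) for x ∈ V₀ and u₀(x) = m otherwise, and iteratively u_{n+1}(x) = g(x) for x ∈ V₀ and u_{n+1}(x) = p·max_{y∼x} u_n(y) + q·min_{y∼x} u_n(y) for x ∈ V∖V₀. Then for all n ≥ 0 and all x ∈ V, u_n(x) ≤ u_{n+1}(x) ≤ M; i.e., the sequence of functions is pointwise nondecreasing and bounded above by M. -/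
/-- In a connected graph with at least two vertices every vertex has a neighbor. -/
lemma neighborFinset_nonempty_of_connected {V : Type*} [Fintype V]
    (G : SimpleGraph V) [DecidableRel G.Adj]
    (hc : G.Connected) (h2 : 1 < Fintype.card V) (x : V) :
    (G.neighborFinset x).Nonempty := by
  obtain ⟨y, hy⟩ := Fintype.exists_ne_of_one_lt_card h2 x
  obtain ⟨w⟩ := hc.preconnected x y
  cases w with
  | nil => exact absurd rfl hy
  | cons h _ => exact ⟨_, (G.mem_neighborFinset x _).mpr h⟩

/-- for the iteration started from below (`u₀ = g` on `V₀`, `u₀ = m` off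
`V₀`, and `u_{n+1} = g` on `V₀`, `u_{n+1}(x) = p ⬝ max_{y∼x} u_n(y) + q ⬝ min_{y∼x} u_n(y)`
off `V₀`), the sequence is pointwise nondecreasing and bounded above by
`M = max_{x ∈ V₀} g(x)`: for all `n` and `x`, `u_n(x) ≤ u_{n+1}(x) ≤ M`. -/
theorem stmt_14 {V : Type*} [Fintype V] [DecidableEq V] (G : SimpleGraph V) [DecidableRel G.Adj]
    (hcard : 1 < Fintype.card V) (hconn : G.Connected)
    (V₀ : Finset V) (hV₀ : V₀.Nonempty) (g : V → ℝ)
    (p q : ℝ) (hp : p ∈ Set.Ioo (0 : ℝ) 1) (hq : q = 1 - p)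
    (m M : ℝ) (hm : m = V₀.inf' hV₀ g) (hM : M = V₀.sup' hV₀ g)
    (u : ℕ → V → ℝ)
    (hu0 : ∀ x, u 0 x = if x ∈ V₀ then g x else m)
    (hstep : ∀ n x, u (n + 1) x = if x ∈ V₀ then g x else
      p * (G.neighborFinset x).sup'
            (neighborFinset_nonempty_of_connected G hconn hcard x) (u n)
        + q * (G.neighborFinset x).inf'
            (neighborFinset_nonempty_of_connected G hconn hcard x) (u n)) :
    ∀ n x, u n x ≤ u (n + 1) x ∧ u (n + 1) x ≤ M := by

  obtain ⟨hp0, hp1⟩ := hp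
  have hq0 : (0:ℝ) ≤ q := by rw [hq]; linarith
  have hpq : p + q = 1 := by rw [hq]; ring
  have hmM : m ≤ M := by
    rw [hm, hM]
    exact le_trans (Finset.inf'_le g hV₀.choose_spec) (Finset.le_sup' g hV₀.choose_spec)
  -- bounds: m ≤ u n x ≤ M for all n, x
  have hbound : ∀ n x, m ≤ u n x ∧ u n x ≤ M := by
    intro n
    induction n with
    | zero =>
      intro x
      rw [hu0 x]
      split
      · exact ⟨hm ▸ Finset.inf'_le g ‹_›, hM ▸ Finset.le_sup' g ‹_›⟩
      · exact ⟨le_refl m, hmM⟩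
    | succ n ih =>
      intro x
      rw [hstep n x]
      split
      · exact ⟨hm ▸ Finset.inf'_le g ‹_›, hM ▸ Finset.le_sup' g ‹_›⟩
      · set ne := neighborFinset_nonempty_of_connected G hconn hcard x
        have hS : (G.neighborFinset x).sup' ne (u n) ≤ M :=
          Finset.sup'_le ne _ (fun y _ => (ih y).2)
        have hI : m ≤ (G.neighborFinset x).inf' ne (u n) :=
          Finset.le_inf' ne _ (fun y _ => (ih y).1)
        have hIS : (G.neighborFinset x).inf' ne (u n) ≤ (G.neighborFinset x).sup' ne (u n) := by
          obtain ⟨y, hy⟩ := ne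
          exact (Finset.inf'_le (u n) hy).trans (Finset.le_sup' (u n) hy)
        have hm' : p * m + q * m = m := by rw [hq]; ring
        have hM' : p * M + q * M = M := by rw [hq]; ring
        have h1 := mul_le_mul_of_nonneg_left (hI.trans hIS) hp0.le
        have h2 := mul_le_mul_of_nonneg_left hI hq0
        have h3 := mul_le_mul_of_nonneg_left hS hp0.le
        have h4 := mul_le_mul_of_nonneg_left (hIS.trans hS) hq0
        constructor
        · linarith
        · linarith
  -- monotonicity
  have hmono : ∀ n x, u n x ≤ u (n + 1) x := by
    intro n
    induction n with
    | zero =>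
      intro x
      rw [hu0 x, hstep 0 x]
      split
      · exact le_refl _
      · exact (by
          set ne := neighborFinset_nonempty_of_connected G hconn hcard x
          have hS : m ≤ (G.neighborFinset x).sup' ne (u 0) := by
            obtain ⟨y, hy⟩ := ne
            exact le_trans (hbound 0 y).1 (Finset.le_sup' (u 0) hy)
          have hI : m ≤ (G.neighborFinset x).inf' ne (u 0) :=
            Finset.le_inf' ne _ (fun y _ => (hbound 0 y).1)
          have hm' : p * m + q * m = m := by rw [hq]; ring
          have h1 := mul_le_mul_of_nonneg_left hS hp0.le
          have h2 := mul_le_mul_of_nonneg_left hI hq0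
          linarith)
    | succ n ih =>
      intro x
      rw [hstep n x, hstep (n+1) x]
      split
      · exact le_refl _
      · set ne := neighborFinset_nonempty_of_connected G hconn hcard x
        have hS : (G.neighborFinset x).sup' ne (u n) ≤ (G.neighborFinset x).sup' ne (u (n+1)) :=
          Finset.sup'_mono_fun (fun y _ => ih y)
        have hI : (G.neighborFinset x).inf' ne (u n) ≤ (G.neighborFinset x).inf' ne (u (n+1)) :=
          Finset.le_inf' ne _ (fun y hy => (Finset.inf'_le (u n) hy).trans (ih y))
        have h1 := mul_le_mul_of_nonneg_left hS hp0.le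
        have h2 := mul_le_mul_of_nonneg_left hI hq0
        linarith
  exact fun n x => ⟨hmono n x, (hbound (n+1) x).2⟩
end

section
/- Let G be a finite connected simple graph on vertex set V with |V| ≥ 2, let V₀ ⊆ V be nonempty, let g : V₀ → ℝ, let p ∈ (0,1) and q = 1 − p. Set m = min_{x∈V₀} g(x). Define u₀ : V → ℝ by u₀(x) = g(x) for x ∈ V₀ and u₀(x) = m otherwise, and iteratively u_{n+1}(x) = g(x) for x ∈ V₀ and u_{n+1}(x) = p·max_{y∼x} u_n(y) + q·min_{y∼x} u_n(y) for x ∈ V∖V₀. Then the sequence (u_n) converges pointwise to a function u : V → ℝ which solves the r-biased infinity Laplacian boundary problem: u(x) = g(x) for x ∈ V₀ and u(x) = p·max_{y∼x} u(y) + q·min_{y∼x} u(y) for x ∈ V∖V₀. In particular, a solution of the boundary problem exists. -/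
/-!
The iteration is `u (n + 1) = T (u n)` for the operator `T` that keeps the boundary values and
replaces every interior value by `p ⬝ max + q ⬝ min` over the neighbours. For `p, q ≥ 0` this
operator is monotone and continuous. The starting function `u 0` lies below its image (at an
interior vertex it equals the minimum `m` of the boundary data, and `T` fixes constants there),
while the constant `M = max g` lies above its image and above `u 0`. Hence the iterates increase,
stay below `M`, converge, and by continuity the limit is a fixed point of `T`, i.e. a solution.
-/

open Filter Topology

theorem Monotone.exists_tendsto_isFixedPt {α : Type*} [ConditionallyCompleteLattice α]
    [TopologicalSpace α] [SupConvergenceClass α] [T2Space α] {f : α → α}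
    (hmono : Monotone f) (hcont : Continuous f) {u : ℕ → α} (hu : ∀ n, u (n + 1) = f (u n))
    (hsub : u 0 ≤ f (u 0)) {b : α} (hb : u 0 ≤ b) (hsup : f b ≤ b) :
    ∃ w, Tendsto u atTop (𝓝 w) ∧ Function.IsFixedPt f w := by
  have hle_succ : ∀ n, u n ≤ u (n + 1) := by
    intro n
    induction n with
    | zero => rw [hu 0]; exact hsub
    | succ n ih => rw [hu n, hu (n + 1)]; exact hmono ih
  have hle_b : ∀ n, u n ≤ b := by
    intro n
    induction n with
    | zero => exact hb
    | succ n ih => rw [hu n]; exact (hmono ih).trans hsup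
  have hlim : Tendsto u atTop (𝓝 (⨆ n, u n)) :=
    tendsto_atTop_ciSup (monotone_nat_of_le_succ hle_succ) ⟨b, Set.forall_mem_range.2 hle_b⟩
  refine ⟨_, hlim, ?_⟩
  have hshift : Tendsto (fun n => u (n + 1)) atTop (𝓝 (⨆ n, u n)) :=
    hlim.comp (tendsto_add_atTop_nat 1)
  exact tendsto_nhds_unique (((hcont.tendsto _).comp hlim).congr fun n => (hu n).symm) hshift

section BiasedStep

variable {V : Type*} [DecidableEq V] (N : V → Finset V) (hN : ∀ x, (N x).Nonempty)
  (V₀ : Finset V) (g : V → ℝ) (p q : ℝ)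

def biasedInfLaplacianStep (f : V → ℝ) : V → ℝ :=
  fun x => if x ∈ V₀ then g x else p * (N x).sup' (hN x) f + q * (N x).inf' (hN x) f

lemma biasedInfLaplacianStep_mono (hp : 0 ≤ p) (hq : 0 ≤ q) :
    Monotone (biasedInfLaplacianStep N hN V₀ g p q) := by
  intro f f' hf x
  unfold biasedInfLaplacianStep
  split_ifs
  · rfl
  · gcongr <;> exact hf _

lemma continuous_biasedInfLaplacianStep :
    Continuous (biasedInfLaplacianStep N hN V₀ g p q) := by
  refine continuous_pi fun x => ?_
  unfold biasedInfLaplacianStep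
  split_ifs
  · exact continuous_const
  · exact (continuous_const.mul (Continuous.finset_sup'_apply (hN x) fun y _ =>
      continuous_apply y)).add (continuous_const.mul (Continuous.finset_inf'_apply (hN x)
      fun y _ => continuous_apply y))

lemma biasedInfLaplacianStep_const_of_notMem (hpq : p + q = 1) (c : ℝ) {x : V} (hx : x ∉ V₀) :
    biasedInfLaplacianStep N hN V₀ g p q (fun _ => c) x = c := by
  simp only [biasedInfLaplacianStep, hx, if_false, Finset.sup'_const, Finset.inf'_const]
  rw [← add_mul, hpq, one_mul]

lemma biasedInfLaplacianStep_const_le (hpq : p + q = 1) {c : ℝ} (hg : ∀ x ∈ V₀, g x ≤ c) :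
    biasedInfLaplacianStep N hN V₀ g p q (fun _ => c) ≤ fun _ => c := by
  intro x
  by_cases hx : x ∈ V₀
  · simpa [biasedInfLaplacianStep, hx] using hg x hx
  · exact (biasedInfLaplacianStep_const_of_notMem N hN V₀ g p q hpq c hx).le

lemma piecewise_le_biasedInfLaplacianStep (hp : 0 ≤ p) (hq : 0 ≤ q) (hpq : p + q = 1) {c : ℝ}
    (hg : ∀ x ∈ V₀, c ≤ g x) :
    V₀.piecewise g (fun _ => c) ≤
      biasedInfLaplacianStep N hN V₀ g p q (V₀.piecewise g fun _ => c) := by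
  intro x
  by_cases hx : x ∈ V₀
  · simp [biasedInfLaplacianStep, hx]
  · have hc : (fun _ => c) ≤ V₀.piecewise g fun _ => c := fun y => by
      by_cases hy : y ∈ V₀ <;> simp [hy, hg]
    calc V₀.piecewise g (fun _ => c) x
        = biasedInfLaplacianStep N hN V₀ g p q (fun _ => c) x := by
          rw [Finset.piecewise_eq_of_notMem _ _ _ hx,
            biasedInfLaplacianStep_const_of_notMem N hN V₀ g p q hpq c hx]
      _ ≤ _ := biasedInfLaplacianStep_mono N hN V₀ g p q hp hq hc x

end BiasedStep

/-- the iteration started from below (`u₀ = g` on `V₀`, `u₀ = m` off `V₀`,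
and `u_{n+1} = g` on `V₀`, `u_{n+1}(x) = p ⬝ max_{y∼x} u_n(y) + q ⬝ min_{y∼x} u_n(y)` off
`V₀`) converges pointwise to a solution `u` of the `r`-biased infinity Laplacian boundary
problem: `u = g` on `V₀` and `u(x) = p ⬝ max_{y∼x} u(y) + q ⬝ min_{y∼x} u(y)` off `V₀`.
In particular, a solution exists. -/
theorem stmt_15 {V : Type*} [Fintype V] [DecidableEq V]
    (G : SimpleGraph V) [DecidableRel G.Adj]
    (hcard : 1 < Fintype.card V) (hconn : G.Connected)
    (V₀ : Finset V) (hV₀ : V₀.Nonempty) (g : V → ℝ)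
    (p q : ℝ) (hp : p ∈ Set.Ioo (0 : ℝ) 1) (hq : q = 1 - p)
    (m : ℝ) (hm : m = V₀.inf' hV₀ g)
    (u : ℕ → V → ℝ)
    (hu0 : ∀ x, u 0 x = if x ∈ V₀ then g x else m)
    (hstep : ∀ n x, u (n + 1) x = if x ∈ V₀ then g x else
      p * (G.neighborFinset x).sup'
            (neighborFinset_nonempty_of_connected G hconn hcard x) (u n)
        + q * (G.neighborFinset x).inf'
            (neighborFinset_nonempty_of_connected G hconn hcard x) (u n)) :
    ∃ w : V → ℝ,
      (∀ x, Filter.Tendsto (fun n => u n x) Filter.atTop (nhds (w x))) ∧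
      (∀ x ∈ V₀, w x = g x) ∧
      (∀ x ∉ V₀, w x =
        p * (G.neighborFinset x).sup'
              (neighborFinset_nonempty_of_connected G hconn hcard x) w
          + q * (G.neighborFinset x).inf'
              (neighborFinset_nonempty_of_connected G hconn hcard x) w) := by
  obtain ⟨hp0, hp1⟩ := hp
  have hq0 : 0 ≤ q := by linarith
  have hpq : p + q = 1 := by linarith
  set T := biasedInfLaplacianStep (G.neighborFinset ·)
    (neighborFinset_nonempty_of_connected G hconn hcard) V₀ g p q
  have hmono : Monotone T := biasedInfLaplacianStep_mono _ _ _ _ _ _ hp0.le hq0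
  have hu0' : u 0 = V₀.piecewise g fun _ => m := funext hu0
  have hm_le : ∀ x ∈ V₀, m ≤ g x := fun x hx => hm ▸ Finset.inf'_le g hx
  have hg_le : ∀ x ∈ V₀, g x ≤ V₀.sup' hV₀ g := fun x hx => Finset.le_sup' g hx
  have hu0_le : u 0 ≤ fun _ => V₀.sup' hV₀ g := by
    intro x
    obtain ⟨x₀, hx₀⟩ := hV₀
    by_cases hx : x ∈ V₀
    · simpa [hu0, hx] using hg_le x hx
    · simpa [hu0, hx] using (hm_le x₀ hx₀).trans (hg_le x₀ hx₀)
  obtain ⟨w, hw, hfix⟩ := hmono.exists_tendsto_isFixedPt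
    (continuous_biasedInfLaplacianStep _ _ _ _ _ _) (fun n => funext (hstep n))
    (hu0' ▸ piecewise_le_biasedInfLaplacianStep _ _ _ _ _ _ hp0.le hq0 hpq hm_le) hu0_le
    (biasedInfLaplacianStep_const_le _ _ _ _ _ _ hpq hg_le)
  refine ⟨w, tendsto_pi_nhds.1 hw, fun x hx => ?_, fun x hx => ?_⟩
  · rw [← hfix]; simp [T, biasedInfLaplacianStep, hx]
  · conv_lhs => rw [← hfix]
    simp [T, biasedInfLaplacianStep, hx]
end

section
/- Let G be a finite connected simple graph on vertex set V with |V| ≥ 2, let V₀ ⊆ V be nonempty, let g : V₀ → ℝ, let p ∈ (0,1) and q = 1 − p. If u, v : V → ℝ both solve the r-biased infinity Laplacian boundary problem, i.e., u(x) = v(x) = g(x) for x ∈ V₀, u(x) = p·max_{y∼x} u(y) + q·min_{y∼x} u(y) and v(x) = p·max_{y∼x} v(y) + q·min_{y∼x} v(y) for all x ∈ V∖V₀, then u = v. That is, the solution of the boundary problem is unique. -/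
theorem SimpleGraph.Preconnected.exists_mem_inter_of_adj_closed {V : Type*}
    {G : SimpleGraph V} (hG : G.Preconnected) {S T : Set V}
    (hS : ∀ x ∈ S, x ∉ T → ∀ y, G.Adj x y → y ∈ S) (hSne : S.Nonempty)
    (hTne : T.Nonempty) :
    ∃ x ∈ S, x ∈ T := by
  obtain ⟨a, ha⟩ := hSne
  obtain ⟨b, hb⟩ := hTne
  by_contra! hST
  obtain ⟨d, -, hdS, hdS'⟩ := (hG a b).some.exists_boundary_dart S ha fun hbS => hST b hbS hb
  exact hdS' (hS _ hdS (hST _ hdS) _ d.adj)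

theorem Finset.inf'_le_sup' {ι α : Type*} [Lattice α] {N : Finset ι} (hN : N.Nonempty)
    (f : ι → α) : N.inf' hN f ≤ N.sup' hN f :=
  (N.inf'_le f hN.choose_spec).trans (N.le_sup' f hN.choose_spec)

theorem Finset.eq_of_sup'_eq_inf' {ι α : Type*} [Lattice α] {N : Finset ι} (hN : N.Nonempty)
    {f : ι → α} {a : α} (hs : N.sup' hN f = a) (hi : N.inf' hN f = a) : ∀ y ∈ N, f y = a :=
  fun _ hy => le_antisymm (hs ▸ N.le_sup' f hy) (hi ▸ N.inf'_le f hy)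

section BiasedAverage

variable {p q : ℝ}

lemma eq_of_le_biased_avg (hp : 0 < p) (hq : 0 < q) (hpq : p + q = 1) {s i a : ℝ}
    (hs : s ≤ a) (hi : i ≤ a) (ha : a ≤ p * s + q * i) : s = a ∧ i = a := by
  have h : p * (a - s) + q * (a - i) ≤ 0 := by linear_combination ha + a * hpq
  have hs' := mul_nonneg hp.le (sub_nonneg.2 hs)
  have hi' := mul_nonneg hq.le (sub_nonneg.2 hi)
  exact ⟨(sub_eq_zero.1 ((mul_eq_zero.1 (by linarith)).resolve_left hp.ne')).symm,
    (sub_eq_zero.1 ((mul_eq_zero.1 (by linarith)).resolve_left hq.ne')).symm⟩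

lemma eq_of_biased_avg_le (hp : 0 < p) (hq : 0 < q) (hpq : p + q = 1) {s i a : ℝ}
    (hs : a ≤ s) (hi : a ≤ i) (ha : p * s + q * i ≤ a) : s = a ∧ i = a := by
  have := eq_of_le_biased_avg hp hq hpq (neg_le_neg hs) (neg_le_neg hi) (by linarith)
  exact ⟨neg_inj.1 this.1, neg_inj.1 this.2⟩

variable {ι : Type*} {N : Finset ι} (hN : N.Nonempty) {u v : ι → ℝ} {x : ι}

theorem forall_eq_of_lex_extremal (hp : 0 < p) (hq : 0 < q) (hpq : p + q = 1)
    (hw : ∀ y ∈ N, u y - v y ≤ u x - v x)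
    (hu_max : ∀ y ∈ N, u y - v y = u x - v x → u y ≤ u x)
    (hv_min : ∀ y ∈ N, u y - v y = u x - v x → u y = u x → v x ≤ v y)
    (hux : u x ≤ p * N.sup' hN u + q * N.inf' hN u)
    (hvx : p * N.sup' hN v + q * N.inf' hN v ≤ v x) :
    ∀ y ∈ N, u y = u x ∧ v y = v x := by
  have hsup : N.sup' hN u - N.sup' hN v ≤ u x - v x := by
    refine sub_le_iff_le_add.2 (N.sup'_le hN u fun y hy => ?_)
    linarith [hw y hy, N.le_sup' v hy]
  have hinf : N.inf' hN u - N.inf' hN v ≤ u x - v x := by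
    refine sub_le_comm.1 (N.le_inf' hN v fun y hy => ?_)
    linarith [hw y hy, N.inf'_le u hy]
  -- `u x - v x` is a biased average of the two differences, both bounded by it.
  have havg : u x - v x ≤
      p * (N.sup' hN u - N.sup' hN v) + q * (N.inf' hN u - N.inf' hN v) := by linarith
  obtain ⟨hsup_eq, hinf_eq⟩ := eq_of_le_biased_avg hp hq hpq hsup hinf havg
  obtain ⟨a, ha, hua⟩ := N.exists_mem_eq_sup' hN u
  have hwa : u a - v a = u x - v x := le_antisymm (hw a ha) (by linarith [N.le_sup' v ha])
  have hsu_le : N.sup' hN u ≤ u x := hua ▸ hu_max a ha hwa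
  obtain ⟨hsu, hiu⟩ :=
    eq_of_le_biased_avg hp hq hpq hsu_le ((N.inf'_le_sup' hN u).trans hsu_le) hux
  obtain ⟨b, hb, hvb⟩ := N.exists_mem_eq_inf' hN v
  have hwb : u b - v b = u x - v x := le_antisymm (hw b hb) (by linarith [N.inf'_le u hb])
  have hub : u b = u x := Finset.eq_of_sup'_eq_inf' hN hsu hiu b hb
  have hiv_ge : v x ≤ N.inf' hN v := hvb ▸ hv_min b hb hwb hub
  obtain ⟨hsv, hiv⟩ :=
    eq_of_biased_avg_le hp hq hpq (hiv_ge.trans (N.inf'_le_sup' hN v)) hiv_ge hvx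
  exact fun y hy => ⟨Finset.eq_of_sup'_eq_inf' hN hsu hiu y hy,
    Finset.eq_of_sup'_eq_inf' hN hsv hiv y hy⟩

end BiasedAverage

theorem SimpleGraph.Preconnected.le_of_biased_sub_super {V : Type*} [Fintype V]
    {G : SimpleGraph V} [DecidableRel G.Adj] (hG : G.Preconnected)
    (hN : ∀ x, (G.neighborFinset x).Nonempty)
    {V₀ : Set V} (hV₀ : V₀.Nonempty) {p q : ℝ} (hp : 0 < p) (hq : 0 < q) (hpq : p + q = 1)
    {u v : V → ℝ}
    (hu : ∀ x ∉ V₀, u x ≤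
      p * (G.neighborFinset x).sup' (hN x) u + q * (G.neighborFinset x).inf' (hN x) u)
    (hv : ∀ x ∉ V₀,
      p * (G.neighborFinset x).sup' (hN x) v + q * (G.neighborFinset x).inf' (hN x) v ≤ v x)
    (h₀ : ∀ x ∈ V₀, u x ≤ v x) :
    u ≤ v := by
  let key : V → ℝ ×ₗ ℝ ×ₗ ℝ := fun x => toLex (u x - v x, toLex (u x, -v x))
  have key_le {x y : V} (h : key y ≤ key x) : u y - v y ≤ u x - v x ∧
      (u y - v y = u x - v x → u y ≤ u x ∧ (u y = u x → v x ≤ v y)) := by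
    simpa [key, Prod.Lex.toLex_le_toLex'] using h
  set S : Set V := {x | ∀ y, key y ≤ key x}
  have hS : ∀ x ∈ S, x ∉ V₀ → ∀ y, G.Adj x y → y ∈ S := by
    intro x hx hx₀ y hxy
    obtain ⟨huy, hvy⟩ := forall_eq_of_lex_extremal (hN x) hp hq hpq
      (fun z _ => (key_le (hx z)).1) (fun z _ hz => ((key_le (hx z)).2 hz).1)
      (fun z _ hz => ((key_le (hx z)).2 hz).2) (hu x hx₀) (hv x hx₀) y
      ((G.mem_neighborFinset x y).2 hxy)
    have : key y = key x := by simp only [key, huy, hvy]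
    exact fun z => this ▸ hx z
  have : Nonempty V := hV₀.to_type
  obtain ⟨c, hcS, hcV₀⟩ :=
    hG.exists_mem_inter_of_adj_closed hS (Finite.exists_max key) hV₀
  intro x
  linarith [(key_le (hcS x)).1, h₀ c hcV₀]

/-- uniqueness of the solution of the `r`-biased infinity Laplacian
boundary problem: if `u` and `v` both agree with `g` on `V₀` and satisfy
`w(x) = p ⬝ max_{y∼x} w(y) + q ⬝ min_{y∼x} w(y)` for all `x ∉ V₀`, then `u = v`. -/
theorem stmt_16 {V : Type*} [Fintype V] [DecidableEq V]
    (G : SimpleGraph V) [DecidableRel G.Adj]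
    (hcard : 1 < Fintype.card V) (hconn : G.Connected)
    (V₀ : Finset V) (hV₀ : V₀.Nonempty) (g : V → ℝ)
    (p q : ℝ) (hp : p ∈ Set.Ioo (0 : ℝ) 1) (hq : q = 1 - p)
    (u v : V → ℝ)
    (hu₀ : ∀ x ∈ V₀, u x = g x) (hv₀ : ∀ x ∈ V₀, v x = g x)
    (hu : ∀ x ∉ V₀, u x =
      p * (G.neighborFinset x).sup'
            (neighborFinset_nonempty_of_connected G hconn hcard x) u
        + q * (G.neighborFinset x).inf'
            (neighborFinset_nonempty_of_connected G hconn hcard x) u)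
    (hv : ∀ x ∉ V₀, v x =
      p * (G.neighborFinset x).sup'
            (neighborFinset_nonempty_of_connected G hconn hcard x) v
        + q * (G.neighborFinset x).inf'
            (neighborFinset_nonempty_of_connected G hconn hcard x) v) :
    u = v := by
  have hG : G.Preconnected := hconn.preconnected
  have hq₀ : 0 < q := by linarith [hp.2]
  have hpq : p + q = 1 := by linarith
  have hV₀' : (V₀ : Set V).Nonempty := hV₀
  have huv : ∀ x ∈ V₀, u x = v x := fun x hx => (hu₀ x hx).trans (hv₀ x hx).symm
  exact le_antisymm
    (hG.le_of_biased_sub_super _ hV₀' hp.1 hq₀ hpq (fun x hx => (hu x hx).le)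
      (fun x hx => (hv x hx).ge) fun x hx => (huv x hx).le)
    (hG.le_of_biased_sub_super _ hV₀' hp.1 hq₀ hpq (fun x hx => (hv x hx).le)
      (fun x hx => (hu x hx).ge) fun x hx => (huv x hx).ge)
end

section
/- Let G be a finite connected simple graph on vertex set V with |V| ≥ 2, let V₀ ⊆ V be nonempty, let g : V₀ → ℝ, let p ∈ (0,1) and q = 1 − p. Set m = min_{x∈V₀} g(x) and M = max_{x∈V₀} g(x). Define v₀ : V → ℝ by v₀(x) = g(x) for x ∈ V₀ and v₀(x) = M otherwise, and iteratively v_{n+1}(x) = g(x) for x ∈ V₀ and v_{n+1}(x) = p·max_{y∼x} v_n(y) + q·min_{y∼x} v_n(y) for x ∈ V∖V₀. Then for all n ≥ 0 and all x ∈ V, m ≤ v_{n+1}(x) ≤ v_n(x); i.e., the sequence of functions is pointwise nonincreasing and bounded below by m. -/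
namespace Finset

variable {ι : Type*} {s : Finset ι} (hs : s.Nonempty) {p q c : ℝ} {f f' : ι → ℝ}

lemma inf'_le_sup'_of_nonempty : s.inf' hs f ≤ s.sup' hs f :=
  let ⟨_, hi⟩ := hs
  (inf'_le f hi).trans (le_sup' f hi)

lemma le_mul_sup'_add_mul_inf' (hp : 0 ≤ p) (hq : 0 ≤ q) (hpq : p + q = 1)
    (h : ∀ i ∈ s, c ≤ f i) : c ≤ p * s.sup' hs f + q * s.inf' hs f :=
  have hinf : c ≤ s.inf' hs f := le_inf' hs f h
  calc c = p * c + q * c := by rw [← add_mul, hpq, one_mul]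
    _ ≤ p * s.sup' hs f + q * s.inf' hs f := by
      gcongr
      exact hinf.trans (inf'_le_sup'_of_nonempty hs)

lemma mul_sup'_add_mul_inf'_le (hp : 0 ≤ p) (hq : 0 ≤ q) (hpq : p + q = 1)
    (h : ∀ i ∈ s, f i ≤ c) : p * s.sup' hs f + q * s.inf' hs f ≤ c :=
  have hsup : s.sup' hs f ≤ c := sup'_le hs f h
  calc p * s.sup' hs f + q * s.inf' hs f ≤ p * c + q * c := by
        gcongr
        exact (inf'_le_sup'_of_nonempty hs).trans hsup
    _ = c := by rw [← add_mul, hpq, one_mul]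

lemma mul_sup'_add_mul_inf'_mono (hp : 0 ≤ p) (hq : 0 ≤ q) (h : ∀ i ∈ s, f i ≤ f' i) :
    p * s.sup' hs f + q * s.inf' hs f ≤ p * s.sup' hs f' + q * s.inf' hs f' := by
  gcongr <;> exact h _ ‹_›

end Finset

open Finset in
/-- for the iteration started from above (`v₀ = g` on `V₀`, `v₀ = M` off
`V₀`, and `v_{n+1} = g` on `V₀`, `v_{n+1}(x) = p ⬝ max_{y∼x} v_n(y) + q ⬝ min_{y∼x} v_n(y)`
off `V₀`), the sequence is pointwise nonincreasing and bounded below by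
`m = min_{x ∈ V₀} g(x)`: for all `n` and `x`, `m ≤ v_{n+1}(x) ≤ v_n(x)`. -/
theorem stmt_17 {V : Type*} [Fintype V] [DecidableEq V]
    (G : SimpleGraph V) [DecidableRel G.Adj]
    (hcard : 1 < Fintype.card V) (hconn : G.Connected)
    (V₀ : Finset V) (hV₀ : V₀.Nonempty) (g : V → ℝ)
    (p q : ℝ) (hp : p ∈ Set.Ioo (0 : ℝ) 1) (hq : q = 1 - p)
    (m M : ℝ) (hm : m = V₀.inf' hV₀ g) (hM : M = V₀.sup' hV₀ g)
    (v : ℕ → V → ℝ)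
    (hv0 : ∀ x, v 0 x = if x ∈ V₀ then g x else M)
    (hstep : ∀ n x, v (n + 1) x = if x ∈ V₀ then g x else
      p * (G.neighborFinset x).sup'
            (neighborFinset_nonempty_of_connected G hconn hcard x) (v n)
        + q * (G.neighborFinset x).inf'
            (neighborFinset_nonempty_of_connected G hconn hcard x) (v n)) :
    ∀ n x, m ≤ v (n + 1) x ∧ v (n + 1) x ≤ v n x := by
  have hp0 : 0 ≤ p := hp.1.le
  have hq0 : 0 ≤ q := by linarith [hp.2]
  have hpq : p + q = 1 := by linarith
  have hmg : ∀ x ∈ V₀, m ≤ g x := fun x hx => hm ▸ inf'_le g hx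
  have hgM : ∀ x ∈ V₀, g x ≤ M := fun x hx => hM ▸ le_sup' g hx
  have hv0M : ∀ x, v 0 x ≤ M := fun x => by
    rw [hv0]; split_ifs with hx
    exacts [hgM x hx, le_rfl]
  have hmM : m ≤ M := hm ▸ hM ▸ inf'_le_sup'_of_nonempty hV₀
  have hlow : ∀ n x, m ≤ v n x := by
    intro n
    induction n with
    | zero =>
      intro x; rw [hv0]; split_ifs with hx
      exacts [hmg x hx, hmM]
    | succ n ih =>
      intro x; rw [hstep]; split_ifs with hx
      exacts [hmg x hx, le_mul_sup'_add_mul_inf' _ hp0 hq0 hpq fun y _ => ih y]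
  have hmono : ∀ n x, v (n + 1) x ≤ v n x := by
    intro n
    induction n with
    | zero =>
      intro x; rw [hstep, hv0]; split_ifs
      exacts [le_rfl, mul_sup'_add_mul_inf'_le _ hp0 hq0 hpq fun y _ => hv0M y]
    | succ n ih =>
      intro x; rw [hstep (n + 1), hstep n]; split_ifs
      exacts [le_rfl, mul_sup'_add_mul_inf'_mono _ hp0 hq0 fun y _ => ih y]
  exact fun n x => ⟨hlow (n + 1) x, hmono n x⟩
end

section
/- Let G be a finite connected simple graph on vertex set V with |V| ≥ 2, let V₀ ⊆ V be nonempty, let g : V₀ → ℝ, let p ∈ (0,1) and q = 1 − p. Set m = min_{x∈V₀} g(x) and M = max_{x∈V₀} g(x). Let (u_n) be the iteration started from below (u₀ = g on V₀ and u₀ = m off V₀) and (v_n) the iteration started from above (v₀ = g on V₀ and v₀ = M off V₀), where in both cases w_{n+1}(x) = g(x) for x ∈ V₀ and w_{n+1}(x) = p·max_{y∼x} w_n(y) + q·min_{y∼x} w_n(y) for x ∈ V∖V₀. If w : V → ℝ is any solution of the r-biased infinity Laplacian boundary problem, then u_n(x) ≤ w(x) ≤ v_n(x) for every n ≥ 0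 and every x ∈ V; i.e., at each step the two iterations give lower and upper bounds for any solution. -/
namespace Finset

variable {ι α : Type*} [AddCommGroup α] [LinearOrder α] [IsOrderedAddMonoid α]
  {s : Finset ι}

theorem sup'_neg_eq_neg_inf' (hs : s.Nonempty) (f : ι → α) : s.sup' hs (-f) = -s.inf' hs f := by
  refine le_antisymm (sup'_le hs _ fun i hi => neg_le_neg (inf'_le f hi)) ?_
  rw [neg_le]
  exact le_inf' hs f fun i hi => neg_le.mp (le_sup' (-f) hi)

theorem inf'_neg_eq_neg_sup' (hs : s.Nonempty) (f : ι → α) : s.inf' hs (-f) = -s.sup' hs f := by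
  rw [← neg_neg (s.inf' hs (-f)), ← sup'_neg_eq_neg_inf', neg_neg]

end Finset

namespace SimpleGraph

variable {V : Type*} {G : SimpleGraph V}

theorem Walk.exists_mem_of_adj_closed {s : Set V} {P : V → Prop}
    (hP : ∀ x y, G.Adj x y → x ∉ s → P x → P y) {a b : V} (w : G.Walk a b)
    (hb : b ∈ s) (ha : P a) : ∃ z ∈ s, P z := by
  induction w with
  | nil => exact ⟨_, hb, ha⟩
  | @cons x y _ hxy _ ih =>
    by_cases hx : x ∈ s
    · exact ⟨x, hx, ha⟩
    · exact ih hb (hP x y hxy hx ha)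

variable [Fintype V] [DecidableRel G.Adj]

/-- The `r`-biased averaging operator, `r = q / p`. -/
noncomputable def biasedAvg (G : SimpleGraph V) [DecidableRel G.Adj]
    (hN : ∀ x, (G.neighborFinset x).Nonempty) (p q : ℝ) (f : V → ℝ) (x : V) : ℝ :=
  p * (G.neighborFinset x).sup' (hN x) f + q * (G.neighborFinset x).inf' (hN x) f

variable {hN : ∀ x, (G.neighborFinset x).Nonempty} {p q : ℝ}

theorem biasedAvg_mono (hp : 0 ≤ p) (hq : 0 ≤ q) : Monotone (G.biasedAvg hN p q) :=
  fun f h hfh x => by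
    unfold biasedAvg
    gcongr <;> exact hfh _

theorem biasedAvg_neg (f : V → ℝ) (x : V) :
    G.biasedAvg hN p q (-f) x = -G.biasedAvg hN q p f x := by
  rw [biasedAvg, biasedAvg, Finset.sup'_neg_eq_neg_inf', Finset.inf'_neg_eq_neg_sup']
  ring

theorem adj_eq_of_forall_le_of_eq_biasedAvg (hp : 0 < p) (hq : 0 ≤ q) (hpq : p + q = 1)
    {f : V → ℝ} {x : V} (hmin : ∀ y, f x ≤ f y) (hx : f x = G.biasedAvg hN p q f x)
    {y : V} (hxy : G.Adj x y) : f y = f x := by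
  have hy : y ∈ G.neighborFinset x := (G.mem_neighborFinset x y).mpr hxy
  have hinf : f x ≤ (G.neighborFinset x).inf' (hN x) f :=
    Finset.le_inf' _ _ fun z _ => hmin z
  have hsup : (G.neighborFinset x).sup' (hN x) f ≤ f x := by
    refine le_of_mul_le_mul_left ?_ hp
    unfold biasedAvg at hx
    linarith [mul_le_mul_of_nonneg_left hinf hq, congrArg (· * f x) hpq]
  exact le_antisymm ((Finset.le_sup' f hy).trans hsup) (hmin y)

theorem exists_mem_forall_le_of_biasedAvg (hconn : G.Connected) {s : Set V}
    (hs : s.Nonempty) (hp : 0 < p) (hq : 0 ≤ q) (hpq : p + q = 1) {w : V → ℝ}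
    (hw : ∀ x ∉ s, w x = G.biasedAvg hN p q w x) : ∃ z ∈ s, ∀ x, w z ≤ w x := by
  have : Nonempty V := hs.to_subtype.map Subtype.val
  obtain ⟨x₀, -, hx₀⟩ := Finset.exists_min_image Finset.univ w Finset.univ_nonempty
  obtain ⟨b, hb⟩ := hs
  obtain ⟨walk⟩ := hconn.preconnected x₀ b
  refine walk.exists_mem_of_adj_closed (P := fun x => ∀ y, w x ≤ w y) ?_ hb
    fun y => hx₀ y (Finset.mem_univ y)
  intro x y hxy hx hmin z
  rw [adj_eq_of_forall_le_of_eq_biasedAvg hp hq hpq hmin (hw x hx) hxy]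
  exact hmin z

theorem exists_mem_forall_ge_of_biasedAvg (hconn : G.Connected) {s : Set V}
    (hs : s.Nonempty) (hp : 0 ≤ p) (hq : 0 < q) (hpq : p + q = 1) {w : V → ℝ}
    (hw : ∀ x ∉ s, w x = G.biasedAvg hN p q w x) : ∃ z ∈ s, ∀ x, w x ≤ w z := by
  have hw' : ∀ x ∉ s, (-w) x = G.biasedAvg hN q p (-w) x := fun x hx => by
    rw [biasedAvg_neg, Pi.neg_apply, hw x hx]
  obtain ⟨z, hz, hmin⟩ :=
    exists_mem_forall_le_of_biasedAvg hconn hs hq hp (by linarith) hw'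
  exact ⟨z, hz, fun x => neg_le_neg_iff.mp (hmin x)⟩

theorem inf'_le_of_eq_biasedAvg (hconn : G.Connected) {s : Finset V} (hs : s.Nonempty)
    (hp : 0 < p) (hq : 0 ≤ q) (hpq : p + q = 1) {g w : V → ℝ} (hg : ∀ x ∈ s, w x = g x)
    (hw : ∀ x ∉ s, w x = G.biasedAvg hN p q w x) (x : V) : s.inf' hs g ≤ w x := by
  obtain ⟨z, hz, hmin⟩ := exists_mem_forall_le_of_biasedAvg hconn (s := s) hs hp hq hpq hw
  calc s.inf' hs g ≤ g z := Finset.inf'_le g hz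
    _ = w z := (hg z hz).symm
    _ ≤ w x := hmin x

theorem le_sup'_of_eq_biasedAvg (hconn : G.Connected) {s : Finset V} (hs : s.Nonempty)
    (hp : 0 ≤ p) (hq : 0 < q) (hpq : p + q = 1) {g w : V → ℝ} (hg : ∀ x ∈ s, w x = g x)
    (hw : ∀ x ∉ s, w x = G.biasedAvg hN p q w x) (x : V) : w x ≤ s.sup' hs g := by
  obtain ⟨z, hz, hmax⟩ := exists_mem_forall_ge_of_biasedAvg hconn (s := s) hs hp hq hpq hw
  calc w x ≤ w z := hmax x
    _ = g z := hg z hz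
    _ ≤ s.sup' hs g := Finset.le_sup' g hz

end SimpleGraph

open SimpleGraph

/-- if `(u_n)` is the iteration started from below (`u₀ = g` on `V₀`,
`u₀ = m` off `V₀`) and `(v_n)` the iteration started from above (`v₀ = g` on `V₀`,
`v₀ = M` off `V₀`), both updated by
`w_{n+1}(x) = p ⬝ max_{y∼x} w_n(y) + q ⬝ min_{y∼x} w_n(y)` off `V₀` and `= g` on `V₀`,
then any solution `w` of the `r`-biased infinity Laplacian boundary problem satisfies
`u_n(x) ≤ w(x) ≤ v_n(x)` for every `n` and every `x`. -/
theorem stmt_18 {V : Type*} [Fintype V] [DecidableEq V]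
    (G : SimpleGraph V) [DecidableRel G.Adj]
    (hcard : 1 < Fintype.card V) (hconn : G.Connected)
    (V₀ : Finset V) (hV₀ : V₀.Nonempty) (g : V → ℝ)
    (p q : ℝ) (hp : p ∈ Set.Ioo (0 : ℝ) 1) (hq : q = 1 - p)
    (m M : ℝ) (hm : m = V₀.inf' hV₀ g) (hM : M = V₀.sup' hV₀ g)
    (u v : ℕ → V → ℝ)
    (hu0 : ∀ x, u 0 x = if x ∈ V₀ then g x else m)
    (hv0 : ∀ x, v 0 x = if x ∈ V₀ then g x else M)
    (hustep : ∀ n x, u (n + 1) x = if x ∈ V₀ then g x else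
      p * (G.neighborFinset x).sup'
            (neighborFinset_nonempty_of_connected G hconn hcard x) (u n)
        + q * (G.neighborFinset x).inf'
            (neighborFinset_nonempty_of_connected G hconn hcard x) (u n))
    (hvstep : ∀ n x, v (n + 1) x = if x ∈ V₀ then g x else
      p * (G.neighborFinset x).sup'
            (neighborFinset_nonempty_of_connected G hconn hcard x) (v n)
        + q * (G.neighborFinset x).inf'
            (neighborFinset_nonempty_of_connected G hconn hcard x) (v n))
    (w : V → ℝ)
    (hw₀ : ∀ x ∈ V₀, w x = g x)
    (hw : ∀ x ∉ V₀, w x =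
      p * (G.neighborFinset x).sup'
            (neighborFinset_nonempty_of_connected G hconn hcard x) w
        + q * (G.neighborFinset x).inf'
            (neighborFinset_nonempty_of_connected G hconn hcard x) w) :
    ∀ n x, u n x ≤ w x ∧ w x ≤ v n x := by
  obtain ⟨hp₀, hp₁⟩ := hp
  have hq₀ : 0 < q := by linarith
  have hpq : p + q = 1 := by linarith
  have hmw : ∀ x, m ≤ w x := hm ▸ inf'_le_of_eq_biasedAvg hconn hV₀ hp₀ hq₀.le hpq hw₀ hw
  have hwM : ∀ x, w x ≤ M := hM ▸ le_sup'_of_eq_biasedAvg hconn hV₀ hp₀.le hq₀ hpq hw₀ hw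
  intro n
  induction n with
  | zero =>
    intro x
    by_cases hx : x ∈ V₀
    · simp [hu0, hv0, hx, hw₀]
    · simpa only [hu0, hv0, if_neg hx] using ⟨hmw x, hwM x⟩
  | succ n ih =>
    intro x
    by_cases hx : x ∈ V₀
    · simp [hustep, hvstep, hx, hw₀]
    · rw [hustep, hvstep, if_neg hx, if_neg hx, hw x hx]
      exact ⟨biasedAvg_mono hp₀.le hq₀.le (fun y => (ih y).1) x,
        biasedAvg_mono hp₀.le hq₀.le (fun y => (ih y).2) x⟩
end
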